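/- arXiv:2505.02295 — 2 statements merged into one kernel-verified Lean document; each statement's English description precedes it below -/
import Mathlib

section
/- Let f₀: ℝ → ℝ be continuously differentiable with v ↦ v·f₀'(v) integrable and v·f₀'(v) ≤ 0 for all v (i.e., f₀ is nonincreasing in |v|). Let c₀ > 0, κ ≥ 0, ρ₀ > 0, α₀ > 0. Then there is no complex number σ with Im σ > 0 satisfying the dispersion relation 1 - c₀²/σ² - (κρ₀c₀²/α₀)·(1/σ)·∫ℝ (v·f₀'(v))/(v−σ) dv = 0. -/
open MeasureTheory Complex

/-! For `Im σ > 0` every factor `1 / (v - σ)` has nonnegative imaginary part, so the monotonicity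
`v f₀'(v) ≤ 0` makes the imaginary part of the integral nonpositive. Multiplying the dispersion
relation by `σ` and taking imaginary parts gives `Im σ · (1 + c₀² / |σ|²) - K · Im ∫ … = 0`
with `K = κρ₀c₀²/α₀ ≥ 0`, whose left side is positive. -/

theorem Complex.im_integral_nonpos {α : Type*} [MeasurableSpace α] {μ : Measure α} {f : α → ℂ}
    (hf : ∀ x, (f x).im ≤ 0) : (∫ x, f x ∂μ).im ≤ 0 := by
  by_cases hfi : Integrable f μ
  · rw [← RCLike.im_to_complex, ← integral_im hfi]
    exact integral_nonpos hf
  · simp [integral_undef hfi]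

theorem Complex.im_ofReal_div_sub_nonpos {a x : ℝ} {σ : ℂ} (ha : a ≤ 0) (hσ : 0 ≤ σ.im) :
    ((a : ℂ) / (x - σ)).im ≤ 0 := by
  rw [div_eq_mul_inv, im_ofReal_mul, inv_im, sub_im, ofReal_im, zero_sub, neg_neg]
  exact mul_nonpos_of_nonpos_of_nonneg ha (div_nonneg hσ (normSq_nonneg _))

theorem one_sub_sq_div_sq_sub_mul_ne_zero {σ I : ℂ} {c K : ℝ} (hσ : 0 < σ.im) (hK : 0 ≤ K)
    (hI : I.im ≤ 0) : 1 - (c : ℂ) ^ 2 / σ ^ 2 - (K : ℂ) * (1 / σ) * I ≠ 0 := by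
  have hσ0 : σ ≠ 0 := fun h => by simp [h] at hσ
  intro h
  have hmul : σ - (c : ℂ) ^ 2 / σ - (K : ℂ) * I = 0 := by
    rw [← mul_zero σ, ← h]
    field_simp
  have him := congrArg im hmul
  rw [sub_im, sub_im, ← ofReal_pow, div_eq_mul_inv, im_ofReal_mul, inv_im, im_ofReal_mul,
    zero_im, neg_div, mul_neg] at him
  have hc : 0 ≤ c ^ 2 * (σ.im / normSq σ) :=
    mul_nonneg (sq_nonneg c) (div_nonneg hσ.le (normSq_nonneg σ))
  linarith [mul_nonpos_of_nonneg_of_nonpos hK hI]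

theorem stmt_0_general (f₀ : ℝ → ℝ)
    (hmono : ∀ v : ℝ, v * deriv f₀ v ≤ 0)
    (c₀ κ ρ₀ α₀ : ℝ) (hκ : 0 ≤ κ) (hρ₀ : 0 < ρ₀) (hα₀ : 0 < α₀) :
    ¬ ∃ σ : ℂ, 0 < σ.im ∧
      1 - (c₀ : ℂ)^2 / σ^2 -
        ((κ * ρ₀ * c₀^2 / α₀ : ℝ) : ℂ) * (1 / σ) *
          ∫ v : ℝ, ((v * deriv f₀ v : ℝ) : ℂ) / ((v : ℂ) - σ) = 0 := by
  rintro ⟨σ, hσ, hdisp⟩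
  refine one_sub_sq_div_sq_sub_mul_ne_zero hσ (by positivity) ?_ hdisp
  exact im_integral_nonpos fun v => im_ofReal_div_sub_nonpos (hmono v) hσ.le

/-- Spectral stability of the linearized thick spray system for distributions
monotone in `|v|`: no root of the dispersion relation in the upper half plane. -/
theorem stmt_0 (f₀ : ℝ → ℝ) (hf : ContDiff ℝ 1 f₀)
    (hint : Integrable (fun v : ℝ => v * deriv f₀ v))
    (hmono : ∀ v : ℝ, v * deriv f₀ v ≤ 0)
    (c₀ κ ρ₀ α₀ : ℝ) (hc₀ : 0 < c₀) (hκ : 0 ≤ κ) (hρ₀ : 0 < ρ₀) (hα₀ : 0 < α₀) :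
    ¬ ∃ σ : ℂ, 0 < σ.im ∧
      1 - (c₀ : ℂ)^2 / σ^2 -
        ((κ * ρ₀ * c₀^2 / α₀ : ℝ) : ℂ) * (1 / σ) *
          ∫ v : ℝ, ((v * deriv f₀ v : ℝ) : ℂ) / ((v : ℂ) - σ) = 0 :=
  stmt_0_general f₀ hmono c₀ κ ρ₀ α₀ hκ hρ₀ hα₀
end

section
/- (Scalar Landau damping sign at small coupling.) Let λ₀ ∈ ℝ \ {0}, f₀ C¹ with compact support, holomorphic density allowing continuation, and let D(ω, κ) = ω − λ₀ + κ·H(ω), where H is holomorphic near ω = λ₀ with Im H(λ₀) = π λ₀ f₀'(λ₀) (the Plemelj extension of ∫ v f₀'(v)/(v−ω) dv at ω = λ₀). Then there exist ε > 0 and a C¹ map ω: (−ε, ε) → ℂ with ω(0) = λ₀, D(ω(κ), κ) = 0, and (d/dκ)Im ω(κ)|_{κ=0} = −π λ₀ f₀'(λ₀). In particular, for κ > 0 small, Im ω(κ) < 0 if λ₀ f₀'(λ₀) > 0 and Im ω(κ) > 0 if λ₀ f₀'(λ₀) < 0. -/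
/-!
The root `ω(κ)` of `D(ω, κ) = ω - λ₀ + κ H(ω)` is continued from `ω(0) = λ₀` by the implicit
function theorem, since `∂_ω D(λ₀, 0) = 1`. Differentiating `D(ω(κ), κ) = 0` at `κ = 0` gives
`ω'(0) = -H(λ₀)`, whose imaginary part is `-π λ₀ f₀'(λ₀)`; for small `κ > 0` the sign of
`Im ω(κ)` is the sign of this derivative, because `Im ω(0) = 0`.
-/

open Complex Filter Topology

section Dispersion

variable {𝕜 : Type*} [RCLike 𝕜] {E : Type*} [NormedAddCommGroup E] [NormedSpace 𝕜 E]
  {a : E} {H : E → E}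

/-- `dispersion a H (κ, ω)` is the paper's `D(ω, κ)`. -/
def dispersion (a : E) (H : E → E) (p : 𝕜 × E) : E := p.2 - a + p.1 • H p.2

@[simp]
theorem dispersion_zero_self : dispersion a H ((0 : 𝕜), a) = 0 := by
  simp [dispersion]

theorem contDiffAt_dispersion {n : WithTop ℕ∞} {p : 𝕜 × E} (hH : ContDiffAt 𝕜 n H p.2) :
    ContDiffAt 𝕜 n (dispersion a H) p :=
  (contDiffAt_snd.sub contDiffAt_const).add (contDiffAt_fst.smul (hH.comp p contDiffAt_snd))

theorem hasFDerivAt_dispersion_zero (hH : DifferentiableAt 𝕜 H a) :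
    HasFDerivAt (dispersion a H)
      (.snd 𝕜 𝕜 E + (ContinuousLinearMap.fst 𝕜 𝕜 E).smulRight (H a)) ((0 : 𝕜), a) := by
  have := ((hasFDerivAt_snd (p := ((0 : 𝕜), a))).sub_const a).add
    ((hasFDerivAt_fst (p := ((0 : 𝕜), a))).smul (hH.hasFDerivAt.comp ((0 : 𝕜), a)
      (hasFDerivAt_snd (𝕜 := 𝕜) (p := ((0 : 𝕜), a)))))
  rw [zero_smul, zero_add] at this
  exact this

theorem exists_hasDerivAt_eventually_dispersion_eq_zero [CompleteSpace E]
    (hH : ContDiffAt 𝕜 1 H a) :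
    ∃ ψ : 𝕜 → E, ContDiffAt 𝕜 1 ψ 0 ∧ ψ 0 = a ∧ HasDerivAt ψ (-H a) 0 ∧
      ∀ᶠ κ in 𝓝 0, dispersion a H (κ, ψ κ) = 0 := by
  have hD : ContDiffAt 𝕜 1 (dispersion a H) ((0 : 𝕜), a) := contDiffAt_dispersion hH
  have hD' := (hasFDerivAt_dispersion_zero (hH.differentiableAt one_ne_zero)).fderiv
  have h₂ : fderiv 𝕜 (dispersion a H) ((0 : 𝕜), a) ∘L .inr 𝕜 𝕜 E = .id 𝕜 E := by
    ext; simp [hD']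
  have h₁ : fderiv 𝕜 (dispersion a H) ((0 : 𝕜), a) ∘L .inl 𝕜 𝕜 E =
      .toSpanSingleton 𝕜 (H a) := by
    ext; simp [hD']
  have hinv : (fderiv 𝕜 (dispersion a H) ((0 : 𝕜), a) ∘L .inr 𝕜 𝕜 E).IsInvertible := by
    rw [h₂, ← ContinuousLinearEquiv.coe_refl]
    exact ContinuousLinearMap.isInvertible_equiv
  refine ⟨hD.implicitFunction one_ne_zero hinv, hD.contDiffAt_implicitFunction one_ne_zero hinv,
    hD.implicitFunction_apply_self one_ne_zero hinv, ?_, ?_⟩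
  · have := (hD.hasStrictFDerivAt_implicitFunction one_ne_zero hinv).hasFDerivAt.hasDerivAt
    simpa [h₁, h₂] using this
  · simpa using hD.eventually_apply_implicitFunction one_ne_zero hinv

end Dispersion

section Real

variable {f : ℝ → ℝ} {x₀ d : ℝ}

theorem eventually_nhdsGT_neg_of_hasDerivAt_neg (hf : HasDerivAt f d x₀) (hd : d < 0)
    (hx : f x₀ = 0) : ∀ᶠ x in 𝓝[>] x₀, f x < 0 := by
  filter_upwards [nhdsWithin_le_nhds
    (eventually_nhdsWithin_sign_eq_of_deriv_neg (hf.deriv ▸ hd) hx), self_mem_nhdsWithin]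
    with x hsign (hx : x₀ < x)
  rwa [← sign_eq_neg_one_iff, hsign, sign_eq_neg_one_iff, sub_neg]

theorem eventually_nhdsGT_pos_of_hasDerivAt_pos (hf : HasDerivAt f d x₀) (hd : 0 < d)
    (hx : f x₀ = 0) : ∀ᶠ x in 𝓝[>] x₀, 0 < f x := by
  filter_upwards [nhdsWithin_le_nhds
    (eventually_nhdsWithin_sign_eq_of_deriv_pos (hf.deriv ▸ hd) hx), self_mem_nhdsWithin]
    with x hsign (hx : x₀ < x)
  rwa [← sign_eq_one_iff, hsign, sign_eq_one_iff, sub_pos]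

theorem exists_Ioo_of_eventually_nhds_zero {P : ℝ → Prop} (h : ∀ᶠ x in 𝓝 0, P x) :
    ∃ ε > 0, ∀ x ∈ Set.Ioo (-ε) ε, P x := by
  obtain ⟨ε, hε, hball⟩ := Metric.eventually_nhds_iff_ball.mp h
  exact ⟨ε, hε, fun x hx => hball x (by simpa [Real.ball_zero_eq_Ioo] using hx)⟩

end Real

theorem stmt_15_general (lam₀ : ℝ) (f₀ : ℝ → ℝ)
    (H : ℂ → ℂ) (hH : AnalyticAt ℂ H (lam₀ : ℂ))
    (hHim : (H (lam₀ : ℂ)).im = Real.pi * lam₀ * deriv f₀ lam₀) :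
    ∃ ε : ℝ, 0 < ε ∧ ∃ ω : ℝ → ℂ,
      ContDiffOn ℝ 1 ω (Set.Ioo (-ε) ε) ∧
      ω 0 = (lam₀ : ℂ) ∧
      (∀ κ ∈ Set.Ioo (-ε) ε, ω κ - (lam₀ : ℂ) + (κ : ℂ) * H (ω κ) = 0) ∧
      HasDerivAt (fun κ : ℝ => (ω κ).im) (-(Real.pi * lam₀ * deriv f₀ lam₀)) 0 ∧
      (0 < lam₀ * deriv f₀ lam₀ →
        ∀ᶠ κ : ℝ in nhdsWithin 0 (Set.Ioi 0), (ω κ).im < 0) ∧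
      (lam₀ * deriv f₀ lam₀ < 0 →
        ∀ᶠ κ : ℝ in nhdsWithin 0 (Set.Ioi 0), 0 < (ω κ).im) := by
  obtain ⟨ψ, hψ, hψ0, hψ', hroot⟩ :=
    exists_hasDerivAt_eventually_dispersion_eq_zero (hH.contDiffAt (n := 1))
  let ω : ℝ → ℂ := fun κ => ψ κ
  have hω : ContDiffAt ℝ 1 ω 0 :=
    ContDiffAt.comp (g := ψ) (0 : ℝ) (by simpa using hψ.restrict_scalars ℝ)
      ofRealCLM.contDiff.contDiffAt
  have hroot' : ∀ᶠ κ : ℝ in 𝓝 0, ω κ - lam₀ + κ * H (ω κ) = 0 :=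
    ofRealCLM.continuous.tendsto' 0 0 (by simp) |>.eventually hroot
  obtain ⟨ε, hε, hεω⟩ :=
    exists_Ioo_of_eventually_nhds_zero ((hω.eventually (by simp)).and hroot')
  have hωim : HasDerivAt (fun κ : ℝ => (ω κ).im) (-(Real.pi * lam₀ * deriv f₀ lam₀)) 0 := by
    have := imCLM.hasFDerivAt.comp_hasDerivAt (0 : ℝ) (hψ'.comp_ofReal (z := 0))
    exact this.congr_deriv (by simp [hHim])
  have him0 : (ω 0).im = 0 := by simp [ω, hψ0]
  refine ⟨ε, hε, ω, fun κ hκ => (hεω κ hκ).1.contDiffWithinAt, by simpa [ω] using hψ0,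
    fun κ hκ => (hεω κ hκ).2, hωim, fun hpos => ?_, fun hneg => ?_⟩
  · exact eventually_nhdsGT_neg_of_hasDerivAt_neg hωim (by nlinarith [Real.pi_pos]) him0
  · exact eventually_nhdsGT_pos_of_hasDerivAt_pos hωim (by nlinarith [Real.pi_pos]) him0

/-- Scalar Landau damping sign at small coupling: perturbation of the root
`ω = λ₀` of `D(ω,κ) = ω - λ₀ + κ H(ω)` and the sign of its imaginary part. -/
theorem stmt_15 (lam₀ : ℝ) (hlam₀ : lam₀ ≠ 0)
    (f₀ : ℝ → ℝ) (hf₀ : ContDiff ℝ 1 f₀) (hsupp : HasCompactSupport f₀)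
    (H : ℂ → ℂ) (hH : AnalyticAt ℂ H (lam₀ : ℂ))
    (hHim : (H (lam₀ : ℂ)).im = Real.pi * lam₀ * deriv f₀ lam₀) :
    ∃ ε : ℝ, 0 < ε ∧ ∃ ω : ℝ → ℂ,
      ContDiffOn ℝ 1 ω (Set.Ioo (-ε) ε) ∧
      ω 0 = (lam₀ : ℂ) ∧
      (∀ κ ∈ Set.Ioo (-ε) ε, ω κ - (lam₀ : ℂ) + (κ : ℂ) * H (ω κ) = 0) ∧
      HasDerivAt (fun κ : ℝ => (ω κ).im) (-(Real.pi * lam₀ * deriv f₀ lam₀)) 0 ∧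
      (0 < lam₀ * deriv f₀ lam₀ →
        ∀ᶠ κ : ℝ in nhdsWithin 0 (Set.Ioi 0), (ω κ).im < 0) ∧
      (lam₀ * deriv f₀ lam₀ < 0 →
        ∀ᶠ κ : ℝ in nhdsWithin 0 (Set.Ioi 0), 0 < (ω κ).im) :=
  stmt_15_general lam₀ f₀ H hH hHim
end
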